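/- arXiv:2406.04567 — 3 statements merged into one kernel-verified Lean document; each statement's English description precedes it below -/
import Mathlib

section
/- Let Z be a nonempty finite type, let q and q̄ be probability mass functions on Z with q absolutely continuous with respect to q̄ (i.e. q̄(z) = 0 implies q(z) = 0), let L > 0, and let f : Z → ℝ satisfy 0 ≤ f(z) ≤ L for all z. Then D_KL(q‖q̄) ≥ (2/L²)·(Σ_z q(z)·f(z) − Σ_z q̄(z)·f(z))². -/
open Finset

private lemma aux_hasDerivAt_g (x : ℝ) (hx : 0 < x) :
    HasDerivAt (fun t : ℝ => Real.log t - 2 * (t - 1) / (t + 1))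
      (1 / x - 4 / (x + 1) ^ 2) x := by
  have h1 : HasDerivAt Real.log (1 / x) x := by
    simpa [one_div] using Real.hasDerivAt_log (ne_of_gt hx)
  have h2 : HasDerivAt (fun t : ℝ => 2 * (t - 1) / (t + 1)) (4 / (x + 1) ^ 2) x := by
    have hnum : HasDerivAt (fun t : ℝ => 2 * (t - 1)) 2 x := by
      simpa using ((hasDerivAt_id x).sub_const 1).const_mul 2
    have hden : HasDerivAt (fun t : ℝ => t + 1) 1 x := (hasDerivAt_id x).add_const 1
    have hx1 : x + 1 ≠ 0 := by linarith
    have := hnum.div hden hx1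
    refine this.congr_deriv ?_
    field_simp
    ring
  exact h1.sub h2

private lemma aux_log_ge {t : ℝ} (ht : 1 ≤ t) : 2 * (t - 1) / (t + 1) ≤ Real.log t := by
  have mono : MonotoneOn (fun t : ℝ => Real.log t - 2 * (t - 1) / (t + 1)) (Set.Ici 1) := by
    apply monotoneOn_of_deriv_nonneg (convex_Ici 1)
    · intro x hx
      have hx0 : (0:ℝ) < x := lt_of_lt_of_le one_pos hx
      exact ((aux_hasDerivAt_g x hx0).differentiableAt).continuousAt.continuousWithinAt
    · intro x hx
      rw [interior_Ici] at hx
      exact ((aux_hasDerivAt_g x (by linarith [Set.mem_Ioi.mp hx])).differentiableAt).differentiableWithinAt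
    · intro x hx
      rw [interior_Ici] at hx
      have hx1 : (1:ℝ) < x := Set.mem_Ioi.mp hx
      have hx0 : (0:ℝ) < x := by linarith
      rw [(aux_hasDerivAt_g x hx0).deriv]
      have heq : 1 / x - 4 / (x + 1) ^ 2 = (x - 1) ^ 2 / (x * (x + 1) ^ 2) := by
        field_simp
        ring
      rw [heq]
      positivity
  have h := mono (Set.mem_Ici.mpr le_rfl) (Set.mem_Ici.mpr ht) ht
  simp only [Real.log_one] at h
  norm_num at h
  linarith

private lemma aux_log_le2 {t : ℝ} (ht : 0 < t) (ht1 : t ≤ 1) :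
    Real.log t ≤ 2 * (t - 1) / (t + 1) := by
  have hinv : 1 ≤ 1 / t := by
    rw [le_div_iff₀ ht]; linarith
  have h := aux_log_ge hinv
  rw [Real.log_div one_ne_zero (ne_of_gt ht), Real.log_one, zero_sub] at h
  have he : 2 * (1 / t - 1) / (1 / t + 1) = 2 * (1 - t) / (1 + t) := by
    rw [div_eq_div_iff]
    · field_simp
      try ring
    · have : 1 < 1/t + 1 := by linarith
      linarith
    · linarith
  rw [he] at h
  have h2 : 2 * (1 - t) / (1 + t) = -(2 * (t - 1) / (t + 1)) := by
    rw [← neg_div, add_comm]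
    ring_nf
  rw [h2] at h
  linarith

/-- derivative of h(t) = t log t - t + 1 - 3(t-1)²/(2(t+2)) -/
private lemma aux_hasDerivAt_h (x : ℝ) (hx : 0 < x) :
    HasDerivAt (fun t : ℝ => t * Real.log t - t + 1 - 3 * (t - 1) ^ 2 / (2 * (t + 2)))
      (Real.log x - 3 * (x - 1) * (x + 5) / (2 * (x + 2) ^ 2)) x := by
  have h1 : HasDerivAt (fun t : ℝ => t * Real.log t) (Real.log x + 1) x := by
    have := (hasDerivAt_id x).mul (Real.hasDerivAt_log (ne_of_gt hx))
    refine this.congr_deriv ?_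
    field_simp
    simp only [id_eq]; ring
  have h2 : HasDerivAt (fun t : ℝ => 3 * (t - 1) ^ 2) (6 * (x - 1)) x := by
    have := (((hasDerivAt_id x).sub_const 1).pow 2).const_mul 3
    simp only [id_eq] at this
    refine this.congr_deriv ?_
    ring
  have h3 : HasDerivAt (fun t : ℝ => 2 * (t + 2)) 2 x := by
    simpa using ((hasDerivAt_id x).add_const 2).const_mul 2
  have hden : 2 * (x + 2) ≠ 0 := by positivity
  have h4 := h2.div h3 hden
  have h5 := ((h1.sub (hasDerivAt_id x)).add_const 1).sub h4
  refine h5.congr_deriv ?_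
  field_simp
  ring

/-- key inequality on (0,∞): t log t - t + 1 ≥ 3(t-1)²/(2(t+2)) -/
private lemma aux_t {t : ℝ} (ht : 0 < t) :
    3 * (t - 1) ^ 2 / (2 * (t + 2)) ≤ t * Real.log t - t + 1 := by
  set h : ℝ → ℝ := fun t => t * Real.log t - t + 1 - 3 * (t - 1) ^ 2 / (2 * (t + 2)) with hh
  have h1 : h 1 = 0 := by simp [hh]
  rcases le_or_gt 1 t with hct | hct
  · -- monotone on [1, ∞)
    have mono : MonotoneOn h (Set.Ici 1) := by
      apply monotoneOn_of_deriv_nonneg (convex_Ici 1)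
      · intro x hx
        have hx0 : (0:ℝ) < x := lt_of_lt_of_le one_pos hx
        exact ((aux_hasDerivAt_h x hx0).differentiableAt).continuousAt.continuousWithinAt
      · intro x hx
        rw [interior_Ici] at hx
        exact ((aux_hasDerivAt_h x (by linarith [Set.mem_Ioi.mp hx])).differentiableAt).differentiableWithinAt
      · intro x hx
        rw [interior_Ici] at hx
        have hx1 : (1:ℝ) < x := Set.mem_Ioi.mp hx
        have hx0 : (0:ℝ) < x := by linarith
        rw [(aux_hasDerivAt_h x hx0).deriv]
        have hlog := aux_log_ge hx1.le
        have hcmp : 3 * (x - 1) * (x + 5) / (2 * (x + 2) ^ 2) ≤ 2 * (x - 1) / (x + 1) := by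
          rw [div_le_div_iff₀ (by positivity) (by positivity)]
          nlinarith [mul_nonneg (mul_nonneg (sub_nonneg.mpr hx1.le) (sub_nonneg.mpr hx1.le))
            (sub_nonneg.mpr hx1.le)]
        linarith
    have := mono (Set.mem_Ici.mpr le_rfl) (Set.mem_Ici.mpr hct) hct
    rw [h1] at this
    have h2 : h t = t * Real.log t - t + 1 - 3 * (t - 1) ^ 2 / (2 * (t + 2)) := rfl
    linarith [h2 ▸ this]
  · -- antitone on (0, 1]
    have anti : AntitoneOn h (Set.Ioc 0 1) := by
      apply antitoneOn_of_deriv_nonpos (convex_Ioc 0 1)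
      · intro x hx
        have hx0 : (0:ℝ) < x := hx.1
        exact ((aux_hasDerivAt_h x hx0).differentiableAt).continuousAt.continuousWithinAt
      · intro x hx
        rw [interior_Ioc] at hx
        exact ((aux_hasDerivAt_h x hx.1).differentiableAt).differentiableWithinAt
      · intro x hx
        rw [interior_Ioc] at hx
        have hx0 : (0:ℝ) < x := hx.1
        have hx1 : x < 1 := hx.2
        rw [(aux_hasDerivAt_h x hx0).deriv]
        have hlog := aux_log_le2 hx0 hx1.le
        have hcmp : 2 * (x - 1) / (x + 1) ≤ 3 * (x - 1) * (x + 5) / (2 * (x + 2) ^ 2) := by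
          rw [div_le_div_iff₀ (by positivity) (by positivity)]
          nlinarith [mul_nonneg (mul_nonneg (sub_nonneg.mpr hx1.le) (sub_nonneg.mpr hx1.le))
            (sub_nonneg.mpr hx1.le)]
        linarith
    have := anti (Set.mem_Ioc.mpr ⟨ht, hct.le⟩) (Set.mem_Ioc.mpr ⟨one_pos, le_rfl⟩) hct.le
    rw [h1] at this
    have h2 : h t = t * Real.log t - t + 1 - 3 * (t - 1) ^ 2 / (2 * (t + 2)) := rfl
    linarith [h2 ▸ this]

/-- pointwise: x log(x/y) - x + y ≥ (x-y)² / ((2/3)(x+2y)), for x ≥ 0, y > 0 -/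
private lemma aux_point {x y : ℝ} (hx : 0 ≤ x) (hy : 0 < y) :
    (x - y) ^ 2 / (2 / 3 * (x + 2 * y)) ≤ x * Real.log (x / y) - x + y := by
  rcases eq_or_lt_of_le hx with h0 | hx0
  · rw [← h0]
    have he : ((0:ℝ) - y) ^ 2 / (2 / 3 * (0 + 2 * y)) = 3 * y / 4 := by
      field_simp
      ring
    rw [he]
    simp only [zero_mul, zero_sub, neg_add_eq_sub]
    linarith
  · set t := x / y with htdef
    have ht : 0 < t := div_pos hx0 hy
    have hy' : y ≠ 0 := ne_of_gt hy
    have hxt : t * y = x := div_mul_cancel₀ x hy'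
    have key := aux_t ht
    have e1 : x * Real.log t - x + y = y * (t * Real.log t - t + 1) := by
      rw [← hxt]; ring
    have e2 : (x - y) ^ 2 / (2 / 3 * (x + 2 * y)) = y * (3 * (t - 1) ^ 2 / (2 * (t + 2))) := by
      have ht2 : t + 2 ≠ 0 := by positivity
      rw [← hxt]
      field_simp
    rw [e1, e2]
    exact mul_le_mul_of_nonneg_left key hy.le

theorem stmt_1 {Z : Type*} [Fintype Z] [Nonempty Z]
    (q qbar : Z → ℝ)
    (hq0 : ∀ z, 0 ≤ q z) (hq1 : ∑ z, q z = 1)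
    (hqbar0 : ∀ z, 0 ≤ qbar z) (hqbar1 : ∑ z, qbar z = 1)
    (hac : ∀ z, qbar z = 0 → q z = 0)
    (L : ℝ) (hL : 0 < L)
    (f : Z → ℝ) (hf0 : ∀ z, 0 ≤ f z) (hfL : ∀ z, f z ≤ L) :
    (2 / L ^ 2) * (∑ z, q z * f z - ∑ z, qbar z * f z) ^ 2 ≤
      ∑ z ∈ Finset.univ.filter (fun z => 0 < q z), q z * Real.log (q z / qbar z) := by
  have hD : ∑ z ∈ Finset.univ.filter (fun z => 0 < q z), q z * Real.log (q z / qbar z)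
      = ∑ z, q z * Real.log (q z / qbar z) := by
    apply Finset.sum_filter_of_ne
    intro z _ hz
    rcases (hq0 z).lt_or_eq with h | h
    · exact h
    · exfalso; apply hz; rw [← h, zero_mul]
  rw [hD]
  set S := ∑ z, |q z - qbar z| with hS
  set w : Z → ℝ := fun z => 2 / 3 * (q z + 2 * qbar z) with hw
  have hw0 : ∀ z, 0 ≤ w z := by
    intro z
    have := hq0 z; have := hqbar0 z
    rw [hw]; positivity
  have hzero : ∀ z, w z = 0 → q z = 0 ∧ qbar z = 0 := by
    intro z hz
    have h1 := hq0 z; have h2 := hqbar0 z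
    rw [hw] at hz
    constructor <;> nlinarith
  -- Cauchy-Schwarz (Sedrakyan)
  have hcs : S ^ 2 / 2 ≤ ∑ z, (q z - qbar z) ^ 2 / w z := by
    set s : Finset Z := Finset.univ.filter (fun z => 0 < w z) with hs
    have hmem : ∀ z ∈ s, 0 < w z := fun z hz => (Finset.mem_filter.mp hz).2
    have hSsum : S = ∑ z ∈ s, |q z - qbar z| := by
      rw [hS]
      refine (Finset.sum_filter_of_ne ?_).symm
      intro z _ hz
      rcases (hw0 z).lt_or_eq with h | h
      · exact h
      · obtain ⟨h1, h2⟩ := hzero z h.symm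
        simp [h1, h2] at hz
    have h2sum : ∑ z ∈ s, w z = 2 := by
      have he : ∑ z ∈ s, w z = ∑ z, w z := by
        refine Finset.sum_filter_of_ne ?_
        intro z _ hz
        exact lt_of_le_of_ne (hw0 z) (Ne.symm hz)
      have he2 : ∑ z, w z = 2 / 3 * (∑ z, q z + 2 * ∑ z, qbar z) := by
        rw [hw, ← Finset.mul_sum, Finset.sum_add_distrib, ← Finset.mul_sum]
      rw [he, he2, hq1, hqbar1]; norm_num
    have hsed := Finset.sq_sum_div_le_sum_sq_div s (fun z => |q z - qbar z|) hmem
    rw [h2sum] at hsed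
    have htail : ∑ z ∈ s, |q z - qbar z| ^ 2 / w z ≤ ∑ z, (q z - qbar z) ^ 2 / w z := by
      simp_rw [sq_abs]
      apply Finset.sum_le_sum_of_subset_of_nonneg (Finset.filter_subset _ _)
      intro z _ _
      exact div_nonneg (sq_nonneg _) (hw0 z)
    calc S ^ 2 / 2 = (∑ z ∈ s, |q z - qbar z|) ^ 2 / 2 := by rw [hSsum]
      _ ≤ ∑ z ∈ s, |q z - qbar z| ^ 2 / w z := hsed
      _ ≤ _ := htail
  -- pointwise bound, summed
  have hterm : ∀ z, (q z - qbar z) ^ 2 / w z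
      ≤ q z * Real.log (q z / qbar z) - q z + qbar z := by
    intro z
    rcases (hqbar0 z).lt_or_eq with h | h
    · exact aux_point (hq0 z) h
    · have hqz := hac z h.symm
      simp [hw, ← h, hqz]
  have hsum : ∑ z, (q z - qbar z) ^ 2 / w z
      ≤ ∑ z, (q z * Real.log (q z / qbar z) - q z + qbar z) :=
    Finset.sum_le_sum fun z _ => hterm z
  have heq : ∑ z, (q z * Real.log (q z / qbar z) - q z + qbar z)
      = ∑ z, q z * Real.log (q z / qbar z) := by
    rw [Finset.sum_add_distrib, Finset.sum_sub_distrib, hq1, hqbar1]; ring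
  -- bound on the mean difference
  have hzerosum : ∑ z, (q z - qbar z) = 0 := by
    rw [Finset.sum_sub_distrib, hq1, hqbar1]; ring
  have hdelta : ∑ z, q z * f z - ∑ z, qbar z * f z
      = ∑ z, (q z - qbar z) * (f z - L / 2) := by
    have he : ∑ z, (q z - qbar z) * (f z - L / 2)
        = (∑ z, q z * f z - ∑ z, qbar z * f z) - (L / 2) * ∑ z, (q z - qbar z) := by
      rw [Finset.mul_sum, ← Finset.sum_sub_distrib, ← Finset.sum_sub_distrib]
      apply Finset.sum_congr rfl
      intro z _; ring
    rw [he, hzerosum]; ring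
  have habs : |∑ z, (q z - qbar z) * (f z - L / 2)| ≤ (L / 2) * S := by
    calc |∑ z, (q z - qbar z) * (f z - L / 2)|
        ≤ ∑ z, |(q z - qbar z) * (f z - L / 2)| := Finset.abs_sum_le_sum_abs _ _
      _ ≤ ∑ z, |q z - qbar z| * (L / 2) := by
          apply Finset.sum_le_sum
          intro z _
          rw [abs_mul]
          apply mul_le_mul_of_nonneg_left _ (abs_nonneg _)
          rw [abs_le]
          constructor
          · linarith [hf0 z]
          · linarith [hfL z]
      _ = (L / 2) * S := by rw [← Finset.sum_mul, hS]; ring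
  have hS0 : 0 ≤ S := Finset.sum_nonneg fun z _ => abs_nonneg _
  have hsq : (∑ z, q z * f z - ∑ z, qbar z * f z) ^ 2 ≤ (L / 2) ^ 2 * S ^ 2 := by
    rw [hdelta]
    calc (∑ z, (q z - qbar z) * (f z - L / 2)) ^ 2
        = |∑ z, (q z - qbar z) * (f z - L / 2)| ^ 2 := (sq_abs _).symm
      _ ≤ ((L / 2) * S) ^ 2 := pow_le_pow_left₀ (abs_nonneg _) habs 2
      _ = (L / 2) ^ 2 * S ^ 2 := by ring
  have hfinal : (2 / L ^ 2) * ((L / 2) ^ 2 * S ^ 2) = S ^ 2 / 2 := by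
    field_simp
  calc (2 / L ^ 2) * (∑ z, q z * f z - ∑ z, qbar z * f z) ^ 2
      ≤ (2 / L ^ 2) * ((L / 2) ^ 2 * S ^ 2) :=
        mul_le_mul_of_nonneg_left hsq (by positivity)
    _ = S ^ 2 / 2 := hfinal
    _ ≤ ∑ z, (q z - qbar z) ^ 2 / w z := hcs
    _ ≤ ∑ z, (q z * Real.log (q z / qbar z) - q z + qbar z) := hsum
    _ = ∑ z, q z * Real.log (q z / qbar z) := heq
end

section
/- Let (Ω, P) be a probability space, Z a nonempty finite type, q̄ a probability mass function on Z, and Q : Ω → (Z → ℝ) a measurable map such that for P-almost every ω, Q(ω) is a probability mass function on Z absolutely continuous with respect to q̄, and such that ω ↦ D_KL(Q(ω)‖q̄) is integrable. Let L > 0 and ℓ : Z → ℝ with 0 ≤ ℓ(z) ≤ L for all z. Then for every ε > 0, P({ω : |Σ_z Q(ω)(z)·ℓ(z) − Σ_z q̄(z)·ℓ(z)| ≥ ε}) ≤ L²·(∫ D_KL(Q(ω)‖q̄) dP(ω)) / (2ε²). -/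
open Real Set

/-- `log t` vs `2(t-1)/(t+1)`: the function `φ` is monotone on `(0,∞)`. -/
lemma phi_mono : MonotoneOn (fun t : ℝ => Real.log t - 2*(t-1)/(t+1)) (Set.Ioi 0) := by
  have hderiv : ∀ t ∈ Set.Ioi (0:ℝ),
      HasDerivAt (fun t : ℝ => Real.log t - 2*(t-1)/(t+1))
        ((t-1)^2/(t*(t+1)^2)) t := by
    intro t ht
    have ht0 : (0:ℝ) < t := ht
    have ht1 : t + 1 ≠ 0 := by positivity
    have h1 : HasDerivAt (fun t : ℝ => Real.log t) t⁻¹ t := Real.hasDerivAt_log ht0.ne'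
    have h2 : HasDerivAt (fun t : ℝ => 2*(t-1)/(t+1))
        ((2*(t+1) - 2*(t-1)*1)/(t+1)^2) t := by
      have hn : HasDerivAt (fun t : ℝ => 2*(t-1)) 2 t := by
        simpa using ((hasDerivAt_id t).sub_const 1).const_mul (2:ℝ)
      have hd : HasDerivAt (fun t : ℝ => t+1) 1 t := (hasDerivAt_id t).add_const 1
      exact hn.div hd ht1
    have := h1.sub h2
    refine this.congr_deriv ?_
    field_simp
    ring
  apply monotoneOn_of_deriv_nonneg (convex_Ioi 0)
  · intro t ht
    exact (hderiv t ht).continuousAt.continuousWithinAt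
  · rw [interior_Ioi]
    intro t ht
    exact (hderiv t ht).differentiableAt.differentiableWithinAt
  · rw [interior_Ioi]
    intro t ht
    rw [(hderiv t ht).deriv]
    have ht0 : (0:ℝ) < t := ht
    positivity

lemma log_ge_rat {t : ℝ} (ht : 1 ≤ t) : 2*(t-1)/(t+1) ≤ Real.log t := by
  have := phi_mono (by norm_num : (1:ℝ) ∈ Set.Ioi 0) (Set.mem_Ioi.mpr (by linarith)) ht
  simp only [Real.log_one] at this
  norm_num at this
  linarith

lemma log_le_rat {t : ℝ} (ht0 : 0 < t) (ht : t ≤ 1) : Real.log t ≤ 2*(t-1)/(t+1) := by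
  have := phi_mono (Set.mem_Ioi.mpr ht0) (by norm_num : (1:ℝ) ∈ Set.Ioi 0) ht
  simp only [Real.log_one] at this
  norm_num at this
  linarith

noncomputable def gfun (t : ℝ) : ℝ := t * Real.log t - t + 1 - 3*(t-1)^2/(2*t+4)

lemma gfun_deriv : ∀ t ∈ Set.Ioi (0:ℝ),
    HasDerivAt gfun (Real.log t - 6*(t-1)*(t+5)/(2*t+4)^2) t := by
  intro t ht
  have ht0 : (0:ℝ) < t := ht
  have htd : (2*t+4) ≠ 0 := by positivity
  have h1 : HasDerivAt (fun t : ℝ => t * Real.log t) (1 * Real.log t + t * t⁻¹) t :=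
    (hasDerivAt_id t).mul (Real.hasDerivAt_log ht0.ne')
  have h2 : HasDerivAt (fun t : ℝ => 3*(t-1)^2/(2*t+4))
      ((6*(t-1)*(2*t+4) - 3*(t-1)^2*2)/(2*t+4)^2) t := by
    have hn : HasDerivAt (fun t : ℝ => 3*(t-1)^2) (6*(t-1)) t := by
      have : HasDerivAt (fun t : ℝ => (t-1)^2) (2*(t-1)) t := by
        exact (((hasDerivAt_id t).sub_const 1).fun_pow 2).congr_deriv (by norm_num)
      have h3 := this.const_mul (3:ℝ)
      exact h3.congr_deriv (by ring)
    have hd : HasDerivAt (fun t : ℝ => 2*t+4) 2 t := by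
      simpa using ((hasDerivAt_id t).const_mul (2:ℝ)).add_const 4
    exact hn.div hd htd
  have h3 := ((h1.sub (hasDerivAt_id t)).add_const 1).sub h2
  have heq : gfun = fun x => (x * Real.log x - x + 1) - 3*(x-1)^2/(2*x+4) := by
    funext x; simp only [gfun]
  rw [heq]
  refine h3.congr_deriv ?_
  have htt : t * t⁻¹ = 1 := mul_inv_cancel₀ ht0.ne'
  rw [htt]
  field_simp
  ring

lemma gfun_nonneg {t : ℝ} (ht : 0 < t) : 0 ≤ gfun t := by
  have hg1 : gfun 1 = 0 := by norm_num [gfun]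
  rcases le_total 1 t with h | h
  · -- monotone on Ici 1
    have hmono : MonotoneOn gfun (Set.Ici 1) := by
      apply monotoneOn_of_deriv_nonneg (convex_Ici 1)
      · intro s hs
        exact (gfun_deriv s (by simp only [Set.mem_Ici] at hs; exact Set.mem_Ioi.mpr (by linarith))).continuousAt.continuousWithinAt
      · rw [interior_Ici]
        intro s hs
        have : (1:ℝ) < s := hs
        exact (gfun_deriv s (Set.mem_Ioi.mpr (by linarith))).differentiableAt.differentiableWithinAt
      · rw [interior_Ici]
        intro s hs
        have hs1 : (1:ℝ) < s := hs
        rw [(gfun_deriv s (Set.mem_Ioi.mpr (by linarith))).deriv]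
        have h1 : 6*(s-1)*(s+5)/(2*s+4)^2 ≤ 2*(s-1)/(s+1) := by
          rw [div_le_div_iff₀ (by positivity) (by positivity)]
          nlinarith [sq_nonneg (s-1)]
        have h2 := log_ge_rat hs1.le
        linarith
    have := hmono (Set.mem_Ici.mpr le_rfl) (Set.mem_Ici.mpr h) h
    linarith [hg1 ▸ this]
  · -- antitone on Ioc 0 1
    have hanti : AntitoneOn gfun (Set.Ioc 0 1) := by
      apply antitoneOn_of_deriv_nonpos (convex_Ioc 0 1)
      · intro s hs
        exact (gfun_deriv s (Set.mem_Ioi.mpr hs.1)).continuousAt.continuousWithinAt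
      · intro s hs
        rw [interior_Ioc] at hs
        exact (gfun_deriv s (Set.mem_Ioi.mpr hs.1)).differentiableAt.differentiableWithinAt
      · intro s hs
        rw [interior_Ioc] at hs
        rw [(gfun_deriv s (Set.mem_Ioi.mpr hs.1)).deriv]
        have h1 : 2*(s-1)/(s+1) ≤ 6*(s-1)*(s+5)/(2*s+4)^2 := by
          rw [div_le_div_iff₀ (by nlinarith [hs.1]) (by nlinarith [hs.1])]
          nlinarith [sq_nonneg (s-1), hs.1, hs.2]
        have h2 := log_le_rat hs.1 hs.2.le
        linarith
    have := hanti (Set.mem_Ioc.mpr ⟨ht, h⟩) (Set.mem_Ioc.mpr ⟨one_pos, le_rfl⟩) h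
    linarith [hg1 ▸ this]

/-- Pointwise key inequality. -/
lemma key_pointwise {a b : ℝ} (ha : 0 ≤ a) (hb : 0 ≤ b) (hab : b = 0 → a = 0) :
    3*(a-b)^2/(2*a+4*b) ≤ a * Real.log (a/b) - a + b := by
  rcases eq_or_lt_of_le hb with hb0 | hb0
  · rw [hab hb0.symm, ← hb0]
    norm_num
  · have ht : 0 ≤ a / b := div_nonneg ha hb
    rcases eq_or_lt_of_le ha with ha0 | ha0
    · rw [← ha0]
      norm_num
      rw [div_le_iff₀ (by positivity)]
      nlinarith
    · have hg := gfun_nonneg (div_pos ha0 hb0)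
      have hbne : b ≠ 0 := hb0.ne'
      have hd1 : 2*(a/b)+4 ≠ 0 := by positivity
      have hd2 : 2*a+4*b ≠ 0 := by positivity
      have h1 : b * gfun (a/b) = a * Real.log (a/b) - a + b - 3*(a-b)^2/(2*a+4*b) := by
        simp only [gfun]
        field_simp
      have h2 : 0 ≤ b * gfun (a/b) := mul_nonneg hb hg
      linarith

/-- Finite Pinsker inequality. -/
lemma pinsker_fin {Z : Type*} [Fintype Z] (q qbar : Z → ℝ)
    (hq0 : ∀ z, 0 ≤ q z) (hq1 : ∑ z, q z = 1)
    (hqbar0 : ∀ z, 0 ≤ qbar z) (hqbar1 : ∑ z, qbar z = 1)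
    (habs : ∀ z, qbar z = 0 → q z = 0) :
    (∑ z, |q z - qbar z|)^2 ≤
      2 * ∑ z ∈ Finset.univ.filter (fun z => 0 < q z), q z * Real.log (q z / qbar z) := by
  classical
  set G : Z → ℝ := fun z => q z * Real.log (q z / qbar z) - q z + qbar z with hG
  set w : Z → ℝ := fun z => 2 * q z + 4 * qbar z with hw
  have hD0 : ∑ z ∈ Finset.univ.filter (fun z => 0 < q z), q z * Real.log (q z / qbar z)
      = ∑ z, q z * Real.log (q z / qbar z) := by
    apply Finset.sum_subset (Finset.filter_subset _ _)
    intro z _ hz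
    simp only [Finset.mem_filter, Finset.mem_univ, true_and, not_lt] at hz
    have : q z = 0 := le_antisymm hz (hq0 z)
    simp [this]
  have hDG : ∑ z, q z * Real.log (q z / qbar z) = ∑ z, G z := by
    simp only [hG, Finset.sum_add_distrib, Finset.sum_sub_distrib, hq1, hqbar1]
    ring
  have hwnn : ∀ z, (0:ℝ) ≤ w z := by
    intro z; have := hq0 z; have := hqbar0 z; simp only [hw]; linarith
  have hpt : ∀ z, 3*(q z - qbar z)^2/(w z) ≤ G z := fun z =>
    key_pointwise (hq0 z) (hqbar0 z) (habs z)
  have hptnn : ∀ z, (0:ℝ) ≤ 3*(q z - qbar z)^2/(w z) := fun z =>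
    div_nonneg (by positivity) (hwnn z)
  have hGnn : ∀ z, 0 ≤ G z := fun z => le_trans (hptnn z) (hpt z)
  set s : Finset Z := Finset.univ.filter (fun z => 0 < w z) with hs
  have hws : ∀ z ∈ s, 0 < w z := by
    intro z hz; simpa [hs] using hz
  have habsum : ∑ z, |q z - qbar z| = ∑ z ∈ s, |q z - qbar z| := by
    symm
    apply Finset.sum_subset (Finset.filter_subset _ _)
    intro z _ hz
    simp only [hs, Finset.mem_filter, Finset.mem_univ, true_and, not_lt] at hz
    have h1 : q z = 0 := by have := hq0 z; have := hqbar0 z; simp only [hw] at hz; linarith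
    have h2 : qbar z = 0 := by have := hq0 z; have := hqbar0 z; simp only [hw] at hz; linarith
    simp [h1, h2]
  have CS := Finset.sum_mul_sq_le_sq_mul_sq s
    (fun z => |q z - qbar z| / Real.sqrt (w z)) (fun z => Real.sqrt (w z))
  have hprod : ∑ z ∈ s, (|q z - qbar z| / Real.sqrt (w z)) * Real.sqrt (w z)
      = ∑ z ∈ s, |q z - qbar z| := by
    apply Finset.sum_congr rfl
    intro z hz
    exact div_mul_cancel₀ _ (Real.sqrt_ne_zero'.mpr (hws z hz))
  have hsq1 : ∀ z ∈ s, (|q z - qbar z| / Real.sqrt (w z))^2 = (q z - qbar z)^2 / w z := by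
    intro z hz
    rw [div_pow, sq_abs, Real.sq_sqrt (hws z hz).le]
  have hsq2 : ∀ z ∈ s, (Real.sqrt (w z))^2 = w z := by
    intro z hz
    exact Real.sq_sqrt (hws z hz).le
  rw [hprod, Finset.sum_congr rfl hsq1, Finset.sum_congr rfl hsq2] at CS
  have hT : ∑ z ∈ s, (q z - qbar z)^2 / w z ≤
      (∑ z, q z * Real.log (q z / qbar z)) / 3 := by
    rw [hDG]
    have h1 : ∑ z ∈ s, (q z - qbar z)^2 / w z ≤ ∑ z, (q z - qbar z)^2 / w z :=
      Finset.sum_le_sum_of_subset_of_nonneg (Finset.filter_subset _ _)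
        (fun z _ _ => div_nonneg (by positivity) (hwnn z))
    have h2 : ∑ z, (q z - qbar z)^2 / w z ≤ (∑ z, G z) / 3 := by
      rw [Finset.sum_div]
      apply Finset.sum_le_sum
      intro z _
      have h := hpt z
      rw [mul_div_assoc] at h
      linarith
    linarith
  have hS : ∑ z ∈ s, w z ≤ 6 := by
    have h1 : ∑ z ∈ s, w z ≤ ∑ z, w z :=
      Finset.sum_le_sum_of_subset_of_nonneg (Finset.filter_subset _ _)
        (fun z _ _ => hwnn z)
    have h2 : ∑ z, w z = 6 := by
      simp only [hw, Finset.sum_add_distrib, ← Finset.mul_sum, hq1, hqbar1]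
      norm_num
    linarith
  have hTnn : 0 ≤ ∑ z ∈ s, (q z - qbar z)^2 / w z :=
    Finset.sum_nonneg (fun z _ => div_nonneg (by positivity) (hwnn z))
  rw [habsum, hD0]
  nlinarith [CS, hT, hS, hTnn]

lemma key_event {Z : Type*} [Fintype Z] (q qbar : Z → ℝ)
    (hq0 : ∀ z, 0 ≤ q z) (hq1 : ∑ z, q z = 1)
    (hqbar0 : ∀ z, 0 ≤ qbar z) (hqbar1 : ∑ z, qbar z = 1)
    (habs : ∀ z, qbar z = 0 → q z = 0)
    (L : ℝ) (hL : 0 < L) (ℓ : Z → ℝ) (hℓ0 : ∀ z, 0 ≤ ℓ z) (hℓL : ∀ z, ℓ z ≤ L)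
    (ε : ℝ) (hε : 0 < ε)
    (hev : ε ≤ |∑ z, q z * ℓ z - ∑ z, qbar z * ℓ z|) :
    2*ε^2/L^2 ≤ ∑ z ∈ Finset.univ.filter (fun z => 0 < q z),
      q z * Real.log (q z / qbar z) := by
  classical
  set A : ℝ := ∑ z, |q z - qbar z| with hA
  set D : ℝ := ∑ z ∈ Finset.univ.filter (fun z => 0 < q z),
      q z * Real.log (q z / qbar z) with hD
  have hP : A^2 ≤ 2*D := pinsker_fin q qbar hq0 hq1 hqbar0 hqbar1 habs
  have hA_nonneg : 0 ≤ A := Finset.sum_nonneg (fun z _ => abs_nonneg _)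
  have hdiff : ∑ z, q z * ℓ z - ∑ z, qbar z * ℓ z
      = ∑ z, (q z - qbar z)*(ℓ z - L/2) := by
    have h : ∑ z, (q z - qbar z)*(ℓ z - L/2)
        = (∑ z, q z * ℓ z - ∑ z, qbar z * ℓ z)
          - (L/2) * ((∑ z, q z) - (∑ z, qbar z)) := by
      simp only [Finset.mul_sum, ← Finset.sum_sub_distrib]
      apply Finset.sum_congr rfl
      intro z _
      ring
    rw [h, hq1, hqbar1]
    ring
  have habs_le : |∑ z, (q z - qbar z)*(ℓ z - L/2)| ≤ (L/2) * A := by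
    calc |∑ z, (q z - qbar z)*(ℓ z - L/2)| ≤ ∑ z, |(q z - qbar z)*(ℓ z - L/2)| :=
          Finset.abs_sum_le_sum_abs _ _
      _ ≤ ∑ z, |q z - qbar z| * (L/2) := by
          apply Finset.sum_le_sum
          intro z _
          rw [abs_mul]
          apply mul_le_mul_of_nonneg_left _ (abs_nonneg _)
          exact abs_le.mpr ⟨by linarith [hℓ0 z], by linarith [hℓL z]⟩
      _ = (L/2) * A := by rw [hA, Finset.mul_sum]; apply Finset.sum_congr rfl; intros; ring
  have h1 : ε ≤ (L/2) * A := le_trans hev (hdiff ▸ habs_le)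
  have h2 : ε^2 ≤ ((L/2)*A)^2 := pow_le_pow_left₀ hε.le h1 2
  rw [div_le_iff₀ (by positivity : (0:ℝ) < L^2)]
  nlinarith [h2, hP, sq_nonneg L]

open MeasureTheory

theorem stmt_2 {Ω : Type*} [MeasurableSpace Ω] (P : Measure Ω) [IsProbabilityMeasure P]
    {Z : Type*} [Fintype Z] [Nonempty Z]
    (qbar : Z → ℝ) (hqbar0 : ∀ z, 0 ≤ qbar z) (hqbar1 : ∑ z, qbar z = 1)
    (Q : Ω → Z → ℝ) (hQmeas : Measurable Q)
    (hQpmf : ∀ᵐ ω ∂P, (∀ z, 0 ≤ Q ω z) ∧ (∑ z, Q ω z = 1) ∧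
      (∀ z, qbar z = 0 → Q ω z = 0))
    (hint : Integrable (fun ω =>
      ∑ z ∈ Finset.univ.filter (fun z => 0 < Q ω z),
        Q ω z * Real.log (Q ω z / qbar z)) P)
    (L : ℝ) (hL : 0 < L)
    (ℓ : Z → ℝ) (hℓ0 : ∀ z, 0 ≤ ℓ z) (hℓL : ∀ z, ℓ z ≤ L)
    (ε : ℝ) (hε : 0 < ε) :
    P {ω | ε ≤ |∑ z, Q ω z * ℓ z - ∑ z, qbar z * ℓ z|} ≤
      ENNReal.ofReal (L ^ 2 * (∫ ω, (∑ z ∈ Finset.univ.filter (fun z => 0 < Q ω z),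
        Q ω z * Real.log (Q ω z / qbar z)) ∂P) / (2 * ε ^ 2)) := by
  classical
  set D : Ω → ℝ := fun ω => ∑ z ∈ Finset.univ.filter (fun z => 0 < Q ω z),
      Q ω z * Real.log (Q ω z / qbar z) with hDdef
  have hDnn : 0 ≤ᵐ[P] D := by
    filter_upwards [hQpmf] with ω h
    have hp := pinsker_fin (Q ω) qbar h.1 h.2.1 hqbar0 hqbar1 h.2.2
    have := sq_nonneg (∑ z, |Q ω z - qbar z|)
    simp only [hDdef, Pi.zero_apply]
    linarith
  set c : ℝ := 2*ε^2/L^2 with hc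
  have hc0 : 0 < c := by positivity
  have hmono : P {ω | ε ≤ |∑ z, Q ω z * ℓ z - ∑ z, qbar z * ℓ z|} ≤ P {ω | c ≤ D ω} := by
    apply measure_mono_ae
    filter_upwards [hQpmf] with ω h hev
    exact key_event (Q ω) qbar h.1 h.2.1 hqbar0 hqbar1 h.2.2 L hL ℓ hℓ0 hℓL ε hε hev
  have markov := mul_meas_ge_le_integral_of_nonneg hDnn hint c
  have h1 : (P {ω | c ≤ D ω}).toReal ≤ (∫ ω, D ω ∂P) / c := by
    rw [le_div_iff₀ hc0]
    rw [mul_comm]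
    exact markov
  have h2 : (∫ ω, D ω ∂P) / c = L^2 * (∫ ω, D ω ∂P) / (2*ε^2) := by
    rw [hc]
    field_simp
  calc P {ω | ε ≤ |∑ z, Q ω z * ℓ z - ∑ z, qbar z * ℓ z|}
      ≤ P {ω | c ≤ D ω} := hmono
    _ = ENNReal.ofReal ((P {ω | c ≤ D ω}).toReal) :=
        (ENNReal.ofReal_toReal (measure_ne_top P _)).symm
    _ ≤ ENNReal.ofReal ((∫ ω, D ω ∂P) / c) := ENNReal.ofReal_le_ofReal h1
    _ = _ := by rw [h2]
end

section
/- Let X and Y be nonempty finite types, m ≥ 1, and θ ∈ ℝᵐ. Let f : ℝᵐ → X → (Y → ℝ) be such that for every x ∈ X the map θ ↦ f(θ)(x) is differentiable at θ with Jacobian J_x ∈ ℝ^{Y×m}, and assume J_x ≠ 0 for every x. Let q̄ be a probability mass function on X × Y (the true distribution), let q_X be a probability mass function on X with conditionals q_{Y|x} (probability mass functions on Y), define q(x,y) = q_X(x)·q_{Y|x}(y) and p(x,y) = q_X(x)·softmax(f(θ)(x))(y), and let ℓ : X → Y → ℝ be a loss function. With R_ℓ(μ) = Σ_{x,y} μ(x,y)·ℓ(x)(y)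 and with F(θ,x), G(θ,x) defined as F(θ, x) = ‖J_xᵀ(q_{Y|x} − p_{Y|x})‖₂²/‖J_x‖_F² and G(θ, x) = (Σ_{j=1}^m (1/2)·Σ_{y,y'∈Y} ((q_{Y|x} − p_{Y|x})(y)·(J_x)_{y',j} − (q_{Y|x} − p_{Y|x})(y')·(J_x)_{y,j})²)/‖J_x‖_F², where p_{Y|x} = softmax(f(θ)(x)), the expected risk satisfies R_ℓ(q̄) ≤ |R_ℓ(q̄) − R_ℓ(q)| + R_ℓ(p) + sqrt((Σ_x q_X(x)·(F(θ,x) + G(θ,x)))·(Σ_x q_X(x)·Σ_y ℓ(x)(y)²)). -/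
lemma lagrange {Y : Type*} [Fintype Y] (u v : Y → ℝ) :
    (∑ y, u y * v y) ^ 2 + (1 / 2 : ℝ) * ∑ y, ∑ y', (u y * v y' - u y' * v y) ^ 2
      = (∑ y, u y ^ 2) * (∑ y, v y ^ 2) := by
  have h : ∀ y y' : Y, (u y * v y' - u y' * v y) ^ 2
      = u y ^ 2 * v y' ^ 2 + u y' ^ 2 * v y ^ 2 - 2 * ((u y * v y) * (u y' * v y')) := by
    intros; ring
  simp only [h, Finset.sum_sub_distrib, Finset.sum_add_distrib, ← Finset.mul_sum,
    ← Finset.sum_mul]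
  ring

theorem stmt_14 {X Y : Type*} [Fintype X] [Nonempty X] [Fintype Y] [Nonempty Y]
    (m : ℕ) (hm : 1 ≤ m) (θ : Fin m → ℝ)
    (f : (Fin m → ℝ) → X → Y → ℝ)
    (J : X → Matrix Y (Fin m) ℝ)
    (hdiff : ∀ x, HasFDerivAt (fun θ' => f θ' x)
      (LinearMap.toContinuousLinearMap ((J x).mulVecLin)) θ)
    (hJ : ∀ x, J x ≠ 0)
    (qbar : X × Y → ℝ) (hqbar0 : ∀ z, 0 ≤ qbar z) (hqbar1 : ∑ z, qbar z = 1)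
    (qX : X → ℝ) (hqX0 : ∀ x, 0 ≤ qX x) (hqX1 : ∑ x, qX x = 1)
    (qY : X → Y → ℝ) (hqY0 : ∀ x y, 0 ≤ qY x y) (hqY1 : ∀ x, ∑ y, qY x y = 1)
    (ℓ : X → Y → ℝ)
    (pY : X → Y → ℝ)
    (hpY : pY = fun x y => Real.exp (f θ x y) / ∑ y', Real.exp (f θ x y'))
    (q p : X × Y → ℝ)
    (hq : q = fun z => qX z.1 * qY z.1 z.2)
    (hp : p = fun z => qX z.1 * pY z.1 z.2)
    (R : (X × Y → ℝ) → ℝ)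
    (hR : R = fun μ => ∑ x, ∑ y, μ (x, y) * ℓ x y)
    (F G : X → ℝ)
    (hF : F = fun x =>
      (∑ j, (∑ y, J x y j * (qY x y - pY x y)) ^ 2) / (∑ y, ∑ j, (J x y j) ^ 2))
    (hG : G = fun x =>
      (∑ j, (1 / 2 : ℝ) * ∑ y, ∑ y',
          ((qY x y - pY x y) * J x y' j - (qY x y' - pY x y') * J x y j) ^ 2) /
        (∑ y, ∑ j, (J x y j) ^ 2)) :
    R qbar ≤ |R qbar - R q| + R p +
      Real.sqrt ((∑ x, qX x * (F x + G x)) * (∑ x, qX x * ∑ y, (ℓ x y) ^ 2)) := by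
  set d : X → Y → ℝ := fun x y => qY x y - pY x y with hd
  -- Frobenius norm positive
  have hS : ∀ x, 0 < ∑ y, ∑ j, (J x y j) ^ 2 := by
    intro x
    obtain ⟨y, j, hyj⟩ : ∃ y j, J x y j ≠ 0 := by
      by_contra h
      push_neg at h
      exact hJ x (by ext y j; exact h y j)
    have h1 : 0 < ∑ j, (J x y j) ^ 2 :=
      Finset.sum_pos' (fun _ _ => sq_nonneg _)
        ⟨j, Finset.mem_univ j, by positivity⟩
    exact Finset.sum_pos' (fun _ _ => Finset.sum_nonneg fun _ _ => sq_nonneg _)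
      ⟨y, Finset.mem_univ y, h1⟩
  -- F + G = ∑ d²
  have hFG : ∀ x, F x + G x = ∑ y, d x y ^ 2 := by
    intro x
    rw [hF, hG]
    simp only
    rw [← add_div]
    rw [show (∑ j, (∑ y, J x y j * (qY x y - pY x y)) ^ 2) +
        (∑ j, (1 / 2 : ℝ) * ∑ y, ∑ y',
          ((qY x y - pY x y) * J x y' j - (qY x y' - pY x y') * J x y j) ^ 2)
        = ∑ j, ((∑ y, d x y * J x y j) ^ 2 +
          (1 / 2 : ℝ) * ∑ y, ∑ y', (d x y * J x y' j - d x y' * J x y j) ^ 2) from by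
      rw [← Finset.sum_add_distrib]
      refine Finset.sum_congr rfl fun j _ => ?_
      simp only [hd, mul_comm]]
    have : ∀ j : Fin m, ((∑ y, d x y * J x y j) ^ 2 +
        (1 / 2 : ℝ) * ∑ y, ∑ y', (d x y * J x y' j - d x y' * J x y j) ^ 2)
        = (∑ y, d x y ^ 2) * (∑ y, (J x y j) ^ 2) := fun j =>
      lagrange (fun y => d x y) (fun y => J x y j)
    rw [Finset.sum_congr rfl fun j _ => this j, ← Finset.mul_sum, Finset.sum_comm,
      mul_div_assoc, div_self (ne_of_gt (hS x)), mul_one]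
  -- Cauchy-Schwarz
  have key : (R q - R p) ^ 2 ≤
      (∑ x, qX x * (F x + G x)) * (∑ x, qX x * ∑ y, (ℓ x y) ^ 2) := by
    have hRqp : R q - R p = ∑ z : X × Y,
        (Real.sqrt (qX z.1) * d z.1 z.2) * (Real.sqrt (qX z.1) * ℓ z.1 z.2) := by
      rw [hR, hq, hp]
      simp only
      rw [← Finset.sum_sub_distrib]
      rw [Fintype.sum_prod_type]
      refine Finset.sum_congr rfl fun x _ => ?_
      rw [← Finset.sum_sub_distrib]
      refine Finset.sum_congr rfl fun y _ => ?_
      have : Real.sqrt (qX x) * Real.sqrt (qX x) = qX x := Real.mul_self_sqrt (hqX0 x)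
      simp only [hd]
      linear_combination (-(qY x y - pY x y) * ℓ x y) * this
    rw [hRqp]
    calc (∑ z : X × Y, (Real.sqrt (qX z.1) * d z.1 z.2) * (Real.sqrt (qX z.1) * ℓ z.1 z.2)) ^ 2
        ≤ (∑ z : X × Y, (Real.sqrt (qX z.1) * d z.1 z.2) ^ 2) *
          (∑ z : X × Y, (Real.sqrt (qX z.1) * ℓ z.1 z.2) ^ 2) :=
          Finset.sum_mul_sq_le_sq_mul_sq _ _ _
      _ = (∑ x, qX x * (F x + G x)) * (∑ x, qX x * ∑ y, (ℓ x y) ^ 2) := by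
          congr 1
          · rw [Fintype.sum_prod_type]
            refine Finset.sum_congr rfl fun x _ => ?_
            rw [hFG x, Finset.mul_sum]
            refine Finset.sum_congr rfl fun y _ => ?_
            rw [mul_pow, Real.sq_sqrt (hqX0 x)]
          · rw [Fintype.sum_prod_type]
            refine Finset.sum_congr rfl fun x _ => ?_
            rw [Finset.mul_sum]
            refine Finset.sum_congr rfl fun y _ => ?_
            rw [mul_pow, Real.sq_sqrt (hqX0 x)]
  have habs : |R q - R p| ≤
      Real.sqrt ((∑ x, qX x * (F x + G x)) * (∑ x, qX x * ∑ y, (ℓ x y) ^ 2)) := by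
    rw [← Real.sqrt_sq_eq_abs]
    exact Real.sqrt_le_sqrt key
  have h1 : R qbar - R q ≤ |R qbar - R q| := le_abs_self _
  have h2 : R q - R p ≤ |R q - R p| := le_abs_self _
  linarith
end
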